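/- Let R be an almost sparse sequence. If an operator A satisfies A >_{ae} 0, then there exists m ∈ ℤ such that either A =_{ae} S^m(x) or S^m(x) <_{ae} A <_{ae} S^{m+1}(x). -/

import Mathlib

/-!
A positive operator is squeezed between two shifts: applying the sparseness property to `A >_{ae} 0`
gives `A >_{ae} S^{-Δ}(x)`, while applying it to `S(x) >_{ae} x` shows that some fixed shift at least
doubles every large term, so iterating it outgrows any integer multiple `C · S^L(x)` bounding `A`.
Hence there is a greatest `m` with `A >_{ae} S^m(x)`, and trichotomy between `A` and `S^{m+1}(x)`
finishes the proof.
-/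

open Filter

/-- Evaluation of an operator `A(x) = ∑ z_i S^i(x)` (given by a finitely supported
family of integer coefficients) at the n-th term of the sequence r, where
`S^i(r_n) = r_{n+i}` (clamped at index 0, matching the convention S⁻¹(r_0) = r_0). -/
def opEval (r : ℕ → ℤ) (A : ℤ →₀ ℤ) (n : ℕ) : ℤ :=
  A.sum fun i c => c * r (((n : ℤ) + i).toNat)

/-- `A >_{ae} B` : A(a) > B(a) for all but finitely many a ∈ R. -/
def AEgt (r : ℕ → ℤ) (A B : ℤ →₀ ℤ) : Prop :=
  ∀ᶠ n in atTop, opEval r B n < opEval r A n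

/-- `A =_{ae} B` : A(a) = B(a) for all but finitely many a ∈ R. -/
def AEeq (r : ℕ → ℤ) (A B : ℤ →₀ ℤ) : Prop :=
  ∀ᶠ n in atTop, opEval r A n = opEval r B n

/-- R is almost sparse: (1) any two operators are ae-comparable; (2) whenever
A >_{ae} B there is Δ ≥ 0 with A(S^Δ(x)) >_{ae} B(S^Δ(x)) + x. -/
def AlmostSparse (r : ℕ → ℤ) : Prop :=
  (∀ A B : ℤ →₀ ℤ, AEgt r A B ∨ AEgt r B A ∨ AEeq r A B) ∧
  (∀ A B : ℤ →₀ ℤ, AEgt r A B →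
    ∃ Δ : ℕ, ∀ᶠ n in atTop, opEval r B (n + Δ) + r n < opEval r A (n + Δ))

lemma opEval_single (r : ℕ → ℤ) (m : ℤ) (n : ℕ) :
    opEval r (Finsupp.single m 1) n = r ((n + m : ℤ).toNat) := by
  simp [opEval]

lemma StrictMono.apply_zero_add_le {r : ℕ → ℤ} (hr : StrictMono r) (n : ℕ) : r 0 + n ≤ r n := by
  induction n with
  | zero => simp
  | succ n ih =>
    have := hr (Nat.lt_add_one n)
    push_cast
    omega

lemma StrictMono.eventually_pos {r : ℕ → ℤ} (hr : StrictMono r) : ∀ᶠ n in atTop, 0 < r n := by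
  have : Tendsto r atTop atTop :=
    tendsto_atTop_mono hr.apply_zero_add_le
      (tendsto_atTop_add_const_left _ _ tendsto_natCast_atTop_atTop)
  exact this.eventually_gt_atTop 0

lemma AEgt.trans {r : ℕ → ℤ} {A B C : ℤ →₀ ℤ} (hAB : AEgt r A B) (hBC : AEgt r B C) :
    AEgt r A C :=
  (hAB.and hBC).mono fun _ h => h.2.trans h.1

lemma lt_of_aegt_single {r : ℕ → ℤ} (hr : Monotone r) {a b : ℤ}
    (h : AEgt r (Finsupp.single a 1) (Finsupp.single b 1)) : b < a := by
  by_contra! hab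
  obtain ⟨n, hn⟩ := h.exists
  rw [opEval_single, opEval_single] at hn
  exact hn.not_ge (hr (by omega))

lemma exists_opEval_le_mul {r : ℕ → ℤ} (hr : StrictMono r) (A : ℤ →₀ ℤ) :
    ∃ C : ℤ, ∃ L : ℕ, ∀ᶠ n in atTop, opEval r A n ≤ C * r (n + L) := by
  set L := A.support.sup Int.natAbs
  refine ⟨∑ i ∈ A.support, |A i|, L, ?_⟩
  filter_upwards [(tendsto_sub_atTop_nat L).eventually hr.eventually_pos] with n hn
  rw [opEval, Finsupp.sum, Finset.sum_mul]
  refine Finset.sum_le_sum fun i hi => ?_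
  have hiL : i.natAbs ≤ L := Finset.le_sup hi
  have hpos : 0 ≤ r ((n + i : ℤ).toNat) := hn.le.trans (hr.monotone (by omega))
  calc A i * r ((n + i : ℤ).toNat) ≤ |A i| * r ((n + i : ℤ).toNat) :=
        mul_le_mul_of_nonneg_right (le_abs_self _) hpos
    _ ≤ |A i| * r (n + L) := mul_le_mul_of_nonneg_left (hr.monotone (by omega)) (abs_nonneg _)

namespace AlmostSparse

variable {r : ℕ → ℤ}

lemma exists_two_mul_lt (hr : StrictMono r) (hs : AlmostSparse r) :
    ∃ d : ℕ, ∀ᶠ n in atTop, 2 * r n < r (n + d) := by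
  have hS : AEgt r (Finsupp.single 1 1) (Finsupp.single 0 1) :=
    Eventually.of_forall fun n => by
      rw [opEval_single, opEval_single]
      exact hr (by omega)
  obtain ⟨Δ, hΔ⟩ := hs.2 _ _ hS
  refine ⟨Δ + 1, hΔ.mono fun n hn => ?_⟩
  rw [opEval_single, opEval_single] at hn
  have hle : r n ≤ r (n + Δ) := hr.monotone (Nat.le_add_right n Δ)
  rw [show ((n + Δ : ℕ) + 0 : ℤ).toNat = n + Δ by omega,
    show ((n + Δ : ℕ) + 1 : ℤ).toNat = n + (Δ + 1) by omega] at hn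
  linarith

lemma exists_two_pow_mul_le (hr : StrictMono r) (hs : AlmostSparse r) :
    ∃ d : ℕ, ∀ k : ℕ, ∀ᶠ n in atTop, 2 ^ k * r n ≤ r (n + k * d) := by
  obtain ⟨d, hd⟩ := hs.exists_two_mul_lt hr
  refine ⟨d, fun k => ?_⟩
  induction k with
  | zero => simp
  | succ k ih =>
    filter_upwards [ih, (tendsto_add_atTop_nat (k * d)).eventually hd] with n hk hstep
    rw [show n + (k + 1) * d = n + k * d + d by ring, pow_succ]
    linarith

lemma exists_mul_lt (hr : StrictMono r) (hs : AlmostSparse r) (C : ℤ) :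
    ∃ d : ℕ, ∀ᶠ n in atTop, C * r n < r (n + d) := by
  obtain ⟨d, hd⟩ := hs.exists_two_pow_mul_le hr
  obtain ⟨k, hk⟩ := pow_unbounded_of_one_lt C one_lt_two
  refine ⟨k * d, ?_⟩
  filter_upwards [hd k, hr.eventually_pos] with n hle hpos
  exact (mul_lt_mul_of_pos_right hk hpos).trans_le hle

lemma exists_single_aegt (hr : StrictMono r) (hs : AlmostSparse r) (A : ℤ →₀ ℤ) :
    ∃ M : ℤ, AEgt r (Finsupp.single M 1) A := by
  obtain ⟨C, L, hCL⟩ := exists_opEval_le_mul hr A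
  obtain ⟨d, hd⟩ := hs.exists_mul_lt hr C
  refine ⟨L + d, ?_⟩
  filter_upwards [hCL, (tendsto_add_atTop_nat L).eventually hd] with n hA hdom
  rw [opEval_single, show (n + (L + d : ℤ)).toNat = n + L + d by omega]
  exact hA.trans_lt hdom

lemma exists_aegt_single (hs : AlmostSparse r) {A : ℤ →₀ ℤ} (hA : AEgt r A 0) :
    ∃ m : ℤ, AEgt r A (Finsupp.single m 1) := by
  obtain ⟨Δ, hΔ⟩ := hs.2 A 0 hA
  refine ⟨-Δ, ?_⟩
  filter_upwards [(tendsto_sub_atTop_nat Δ).eventually hΔ, eventually_ge_atTop Δ] with n hn hΔn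
  rw [opEval_single, show (n + -Δ : ℤ).toNat = n - Δ by omega]
  rw [Nat.sub_add_cancel hΔn] at hn
  simpa [opEval] using hn

end AlmostSparse

/-- If R is almost sparse and an operator A satisfies A >_{ae} 0, then there is
m ∈ ℤ with A =_{ae} S^m(x) or S^m(x) <_{ae} A <_{ae} S^{m+1}(x). -/
theorem stmt6 (r : ℕ → ℤ) (hmono : StrictMono r) (hs : AlmostSparse r)
    (A : ℤ →₀ ℤ) (hA : AEgt r A 0) :
    ∃ m : ℤ, AEeq r A (Finsupp.single m 1) ∨
      (AEgt r A (Finsupp.single m 1) ∧ AEgt r (Finsupp.single (m + 1) 1) A) := by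
  obtain ⟨M, hM⟩ := hs.exists_single_aegt hmono A
  obtain ⟨m, hm, hmax⟩ := Int.exists_greatest_of_bdd (P := fun m => AEgt r A (Finsupp.single m 1))
    ⟨M, fun z hz => (lt_of_aegt_single hmono.monotone (hM.trans hz)).le⟩
    (hs.exists_aegt_single hA)
  rcases hs.1 A (Finsupp.single (m + 1) 1) with h | h | h
  · exact absurd (hmax _ h) (by omega)
  · exact ⟨m, Or.inr ⟨hm, h⟩⟩
  · exact ⟨m + 1, Or.inl h⟩
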